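/- Let T be a twist on H ⊗ H with ‖T‖ < 1. Then for every ξ ∈ H the creation operator a*_T(ξ) on the twisted Fock space F_T(H) = ℂΩ ⊕ ⊕_{n≥1} H_{T,n} is bounded with ‖a*_T(ξ)‖ ≤ ‖ξ‖ / √(1 − ‖T‖). -/

import Mathlib

/-!
On `H^{⊗(n+1)}`, `P_{T,n+1} = (1 ⊗ P_{T,n}) R_{T,n+1}` with both `1 ⊗ P_{T,n}` and `P_{T,n+1}`
positive. This forces `⟪v, P_{T,n+1} v⟫ ≤ ‖R_{T,n+1}‖ ⟪v, (1 ⊗ P_{T,n}) v⟫`, and for `v = ξ ⊗ η`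
the right-hand side is `‖R_{T,n+1}‖ ‖ξ‖² ⟪η, P_{T,n} η⟫`. Finally `R_{T,n+1}` is a sum of products
`T₁ ⋯ T_k`, so `‖R_{T,n+1}‖ ≤ ∑ₖ ‖T‖ᵏ ≤ 1 / (1 - ‖T‖)`.
-/

noncomputable section

variable {E : ℕ → Type*} [∀ n, NormedAddCommGroup (E n)] [∀ n, InnerProductSpace ℂ (E n)]
  [∀ n, CompleteSpace (E n)]

/-- `chainT T n k = T₁ T₂ ⋯ T_k`. -/
def chainT (T : ∀ n, ℕ → (E n →L[ℂ] E n)) (n : ℕ) : ℕ → (E n →L[ℂ] E n)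
  | 0 => 1
  | k + 1 => chainT T n k * T n (k + 1)

/-- `Rop T n = 1 + T₁ + T₁T₂ + ⋯ + T₁⋯T_{n-1}`. -/
def Rop (T : ∀ n, ℕ → (E n →L[ℂ] E n)) (n : ℕ) : E n →L[ℂ] E n :=
  ∑ k ∈ Finset.range n, chainT T n k

/-- `P_{T,1} = 1`, `P_{T,n+1} = (1 ⊗ P_{T,n}) R_{T,n+1}`. -/
def Pop (T : ∀ n, ℕ → (E n →L[ℂ] E n))
    (amp : ∀ n, (E n →L[ℂ] E n) →⋆ₐ[ℂ] (E (n + 1) →L[ℂ] E (n + 1))) :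
    ∀ n, E n →L[ℂ] E n
  | 0 => 1
  | n + 1 => amp n (Pop T amp n) * Rop T (n + 1)

open ContinuousLinearMap RCLike

theorem le_of_forall_pow_mul_le_mul_pow {r a c C : ℝ} (ha : 0 < a) (hc : 0 ≤ c)
    (h : ∀ j : ℕ, r ^ j * a ≤ C * c ^ j) : r ≤ c := by
  rcases hc.eq_or_lt with rfl | hc
  · nlinarith [h 1]
  · by_contra! hcr
    obtain ⟨j, hj⟩ := pow_unbounded_of_one_lt (C / a) ((one_lt_div hc).2 hcr)
    rw [div_pow, div_lt_div_iff₀ ha (pow_pos hc j)] at hj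
    linarith [h j]

/-- The ratios `m (j + 1) / m j` increase, so `m 1 / m 0` is at most the growth rate `c`. -/
theorem apply_one_le_mul_apply_zero_of_logConvex {m : ℕ → ℝ} {c C : ℝ} (hc : 0 ≤ c)
    (hm : ∀ j, 0 ≤ m j) (hconv : ∀ j, m (j + 1) ^ 2 ≤ m j * m (j + 2))
    (hbound : ∀ j, m j ≤ C * c ^ j) : m 1 ≤ c * m 0 := by
  rcases (hm 0).eq_or_lt with h0 | h0
  · have : m 1 ^ 2 ≤ 0 := by simpa [← h0] using hconv 0
    rw [← h0]
    nlinarith [hm 1]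
  set r := m 1 / m 0 with hr
  have hr0 : 0 ≤ r := div_nonneg (hm 1) h0.le
  have hratio : ∀ j, r * m j ≤ m (j + 1) := by
    intro j
    induction j with
    | zero => rw [hr, div_mul_cancel₀ _ h0.ne']
    | succ j ih =>
      rcases (hm (j + 1)).eq_or_lt with hj | hj
      · rw [← hj, mul_zero]; exact hm _
      · refine le_of_mul_le_mul_left ?_ hj
        nlinarith [hconv j, mul_le_mul_of_nonneg_right ih (hm (j + 2))]
  have hgeom : ∀ j, r ^ j * m 0 ≤ m j := by
    intro j
    induction j with
    | zero => simp
    | succ j ih =>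
      calc r ^ (j + 1) * m 0 = r * (r ^ j * m 0) := by ring
        _ ≤ r * m j := mul_le_mul_of_nonneg_left ih hr0
        _ ≤ m (j + 1) := hratio j
  have hrc : r ≤ c := le_of_forall_pow_mul_le_mul_pow h0 hc fun j => (hgeom j).trans (hbound j)
  calc m 1 = r * m 0 := by rw [hr, div_mul_cancel₀ _ h0.ne']
    _ ≤ c * m 0 := mul_le_mul_of_nonneg_right hrc h0.le

section PositiveOperator

variable {F : Type*} [NormedAddCommGroup F] [InnerProductSpace ℂ F]

theorem ContinuousLinearMap.norm_pow_apply_le (R : F →L[ℂ] F) (v : F) (j : ℕ) :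
    ‖(R ^ j) v‖ ≤ ‖R‖ ^ j * ‖v‖ := by
  induction j with
  | zero => simp
  | succ j ih =>
    rw [pow_succ', mul_apply_eq_comp, pow_succ', mul_assoc]
    exact R.le_opNorm_of_le ih

variable [CompleteSpace F]

theorem ContinuousLinearMap.IsPositive.re_inner_sq_le {S : F →L[ℂ] F} (hS : S.IsPositive)
    (x y : F) :
    re (inner ℂ x (S y)) ^ 2 ≤ re (inner ℂ x (S x)) * re (inner ℂ y (S y)) := by
  obtain ⟨A, rfl⟩ :=
    CStarAlgebra.nonneg_iff_eq_star_mul_self.mp ((nonneg_iff_isPositive S).mpr hS)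
  have hA : ∀ u w : F, inner ℂ u ((star A * A) w) = inner ℂ (A u) (A w) := fun u w => by
    rw [star_eq_adjoint, mul_apply_eq_comp, adjoint_inner_right]
  simp only [hA, inner_self_eq_norm_sq]
  calc re (inner ℂ (A x) (A y)) ^ 2 = |re (inner ℂ (A x) (A y))| ^ 2 := (sq_abs _).symm
    _ ≤ (‖A x‖ * ‖A y‖) ^ 2 :=
        pow_le_pow_left₀ (abs_nonneg _)
          ((Complex.abs_re_le_norm _).trans (norm_inner_le_norm _ _)) 2
    _ = ‖A x‖ ^ 2 * ‖A y‖ ^ 2 := mul_pow _ _ _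

theorem ContinuousLinearMap.IsPositive.map_starAlgHom {G : Type*} [NormedAddCommGroup G]
    [InnerProductSpace ℂ G] [CompleteSpace G]
    {A : F →L[ℂ] F} (hA : A.IsPositive) (φ : (F →L[ℂ] F) →⋆ₐ[ℂ] (G →L[ℂ] G)) :
    (φ A).IsPositive :=
  (nonneg_iff_isPositive _).mp (map_nonneg φ ((nonneg_iff_isPositive A).mpr hA))

section Symmetric

variable {S R : F →L[ℂ] F}

theorem inner_pow_apply_left_of_adjoint_mul_eq (hSR : adjoint R * S = S * R) (i : ℕ) (x y : F) :
    inner ℂ ((R ^ i) x) (S y) = inner ℂ x (S ((R ^ i) y)) := by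
  have hcomm : ∀ z, adjoint R (S z) = S (R z) := fun z => by
    rw [← mul_apply_eq_comp, hSR, mul_apply_eq_comp]
  induction i generalizing x with
  | zero => simp
  | succ i ih =>
    rw [pow_succ, mul_apply_eq_comp, ih, ← adjoint_inner_right, hcomm, ← pow_succ, pow_succ',
      mul_apply_eq_comp]

theorem inner_pow_add_apply_of_adjoint_mul_eq (hSR : adjoint R * S = S * R) (a b : ℕ) (v : F) :
    inner ℂ v (S ((R ^ (a + b)) v)) = inner ℂ ((R ^ a) v) (S ((R ^ b) v)) := by
  rw [inner_pow_apply_left_of_adjoint_mul_eq hSR, pow_add, mul_apply_eq_comp]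

theorem re_inner_pow_two_mul_apply_nonneg (hS : S.IsPositive) (hSR : adjoint R * S = S * R)
    (k : ℕ) (v : F) : 0 ≤ re (inner ℂ v (S ((R ^ (2 * k)) v))) := by
  rw [two_mul, inner_pow_add_apply_of_adjoint_mul_eq hSR]
  exact hS.re_inner_nonneg_right _

theorem re_inner_pow_apply_sq_le (hS : S.IsPositive) (hSR : adjoint R * S = S * R) (k : ℕ)
    (v : F) :
    re (inner ℂ v (S ((R ^ (2 * k + 1)) v))) ^ 2 ≤
      re (inner ℂ v (S ((R ^ (2 * k)) v))) * re (inner ℂ v (S ((R ^ (2 * k + 2)) v))) := by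
  rw [show 2 * k + 1 = k + (k + 1) by ring, show 2 * k + 2 = (k + 1) + (k + 1) by ring, two_mul]
  simp only [inner_pow_add_apply_of_adjoint_mul_eq hSR]
  exact hS.re_inner_sq_le _ _

end Symmetric

/-- `R` is symmetric for the semi-inner product `⟪x, Q y⟫`, and Cauchy–Schwarz for the two
positive forms `Q` and `Q * R` makes `j ↦ re ⟪v, Q (R ^ j v)⟫` a nonnegative log-convex sequence,
of growth rate at most `‖R‖`. -/
theorem re_inner_mul_apply_le_norm_mul {Q R : F →L[ℂ] F} (hQ : Q.IsPositive)
    (hQR : (Q * R).IsPositive) (v : F) :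
    re (inner ℂ v ((Q * R) v)) ≤ ‖R‖ * re (inner ℂ v (Q v)) := by
  have hsymm : adjoint R * Q = Q * R := by
    simpa only [star_mul, star_eq_adjoint, hQ.isSelfAdjoint.adjoint_eq] using
      hQR.isSelfAdjoint.star_eq
  have hsymm' : adjoint R * (Q * R) = (Q * R) * R := by rw [← mul_assoc, hsymm]
  set m : ℕ → ℝ := fun j => re (inner ℂ v (Q ((R ^ j) v))) with hm
  have hsucc : ∀ j, m (j + 1) = re (inner ℂ v ((Q * R) ((R ^ j) v))) := fun j => by
    simp only [hm, pow_succ', mul_apply_eq_comp]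
  have hnonneg : ∀ j, 0 ≤ m j := by
    intro j
    obtain ⟨k, rfl | rfl⟩ := Nat.even_or_odd' j
    · exact re_inner_pow_two_mul_apply_nonneg hQ hsymm k v
    · rw [hsucc]
      exact re_inner_pow_two_mul_apply_nonneg hQR hsymm' k v
  have hconv : ∀ j, m (j + 1) ^ 2 ≤ m j * m (j + 2) := by
    intro j
    obtain ⟨k, rfl | rfl⟩ := Nat.even_or_odd' j
    · exact re_inner_pow_apply_sq_le hQ hsymm k v
    · rw [hsucc, hsucc, show 2 * k + 1 + 2 = 2 * k + 2 + 1 by ring, hsucc]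
      exact re_inner_pow_apply_sq_le hQR hsymm' k v
  have hbound : ∀ j, m j ≤ ‖Q‖ * ‖v‖ ^ 2 * ‖R‖ ^ j := by
    intro j
    calc m j ≤ ‖v‖ * ‖Q ((R ^ j) v)‖ := re_inner_le_norm _ _
      _ ≤ ‖v‖ * (‖Q‖ * (‖R‖ ^ j * ‖v‖)) :=
          mul_le_mul_of_nonneg_left (Q.le_opNorm_of_le (R.norm_pow_apply_le v j)) (norm_nonneg v)
      _ = ‖Q‖ * ‖v‖ ^ 2 * ‖R‖ ^ j := by ring
  simpa only [hm, pow_zero, pow_one, one_apply_eq_self, mul_apply_eq_comp] using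
    apply_one_le_mul_apply_zero_of_logConvex (norm_nonneg R) hnonneg hconv hbound

end PositiveOperator

section Twist

variable {T : ∀ n, ℕ → (E n →L[ℂ] E n)} {n : ℕ} {q : ℝ}

theorem norm_chainT_le (hq : 0 ≤ q) (hT : ∀ k, 1 ≤ k → k ≤ n - 1 → ‖T n k‖ ≤ q) :
    ∀ k < n, ‖chainT T n k‖ ≤ q ^ k
  | 0, _ => by simpa only [chainT, pow_zero, one_def] using norm_id_le
  | k + 1, hk =>
    calc ‖chainT T n k * T n (k + 1)‖ ≤ ‖chainT T n k‖ * ‖T n (k + 1)‖ := norm_mul_le _ _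
      _ ≤ q ^ k * q :=
          mul_le_mul (norm_chainT_le hq hT k (by omega)) (hT (k + 1) (by omega) (by omega))
            (norm_nonneg _) (pow_nonneg hq k)

theorem norm_Rop_le (hq : 0 ≤ q) (hq1 : q < 1) (hT : ∀ k, 1 ≤ k → k ≤ n - 1 → ‖T n k‖ ≤ q) :
    ‖Rop T n‖ ≤ (1 - q)⁻¹ :=
  calc ‖Rop T n‖ ≤ ∑ k ∈ Finset.range n, ‖chainT T n k‖ := norm_sum_le _ _
    _ ≤ ∑ k ∈ Finset.range n, q ^ k :=
        Finset.sum_le_sum fun k hk => norm_chainT_le hq hT k (Finset.mem_range.mp hk)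
    _ ≤ (1 - q)⁻¹ := by simpa using geom_sum_Ico_le_of_lt_one (m := 0) (n := n) hq hq1

end Twist

theorem stmt6_general {H : Type*} [NormedAddCommGroup H] [InnerProductSpace ℂ H] [CompleteSpace H]
    (T : ∀ n, ℕ → (E n →L[ℂ] E n))
    (amp : ∀ n, (E n →L[ℂ] E n) →⋆ₐ[ℂ] (E (n + 1) →L[ℂ] E (n + 1)))
    -- the elementary tensor map `tens n ξ η = ξ ⊗ η ∈ H^{⊗(n+1)}`
    (tens : ∀ n, H →ₗ[ℂ] E n →ₗ[ℂ] E (n + 1))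
    (htinner : ∀ n (ξ ξ' : H) (η η' : E n),
      (inner ℂ (tens n ξ η) (tens n ξ' η') : ℂ) = (inner ℂ ξ ξ' : ℂ) * (inner ℂ η η' : ℂ))
    (htamp : ∀ n (A : E n →L[ℂ] E n) (ξ : H) (η : E n),
      amp n A (tens n ξ η) = tens n ξ (A η))
    (q : ℝ) (hq0 : 0 ≤ q) (hqlt : q < 1)
    -- `q = ‖T‖ < 1`
    (hqnorm : ∀ n k, 1 ≤ k → k ≤ n - 1 → ‖T n k‖ ≤ q)
    -- `T` is a twist: all `P_{T,n}` are positive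
    (hpos : ∀ n, (Pop T amp n).IsPositive) :
    ∀ n (ξ : H) (η : E n),
      Real.sqrt ((inner ℂ (tens n ξ η) (Pop T amp (n + 1) (tens n ξ η)) : ℂ).re) ≤
        (‖ξ‖ / Real.sqrt (1 - q)) *
          Real.sqrt ((inner ℂ η (Pop T amp n η) : ℂ).re) := by
  intro n ξ η
  set v := tens n ξ η
  set y := re (inner ℂ η (Pop T amp n η))
  have hy : 0 ≤ y := (hpos n).re_inner_nonneg_right η
  have hQv : re (inner ℂ v (amp n (Pop T amp n) v)) = ‖ξ‖ ^ 2 * y := by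
    rw [htamp, htinner, inner_self_eq_norm_sq_to_K, ← RCLike.ofReal_pow, RCLike.re_ofReal_mul]
  have hR : ‖Rop T (n + 1)‖ ≤ (1 - q)⁻¹ := norm_Rop_le hq0 hqlt (hqnorm (n + 1))
  have hmain : re (inner ℂ v (Pop T amp (n + 1) v)) ≤ ‖ξ‖ ^ 2 / (1 - q) * y :=
    calc re (inner ℂ v (Pop T amp (n + 1) v)) ≤ ‖Rop T (n + 1)‖ * (‖ξ‖ ^ 2 * y) :=
          hQv ▸ re_inner_mul_apply_le_norm_mul ((hpos n).map_starAlgHom (amp n)) (hpos (n + 1)) v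
      _ ≤ (1 - q)⁻¹ * (‖ξ‖ ^ 2 * y) := by gcongr
      _ = ‖ξ‖ ^ 2 / (1 - q) * y := by ring
  calc √(re (inner ℂ v (Pop T amp (n + 1) v))) ≤ √(‖ξ‖ ^ 2 / (1 - q) * y) :=
        Real.sqrt_le_sqrt hmain
    _ = ‖ξ‖ / √(1 - q) * √y := by
        rw [Real.sqrt_mul (by positivity), Real.sqrt_div (sq_nonneg _),
          Real.sqrt_sq (norm_nonneg _)]

theorem stmt6 {H : Type*} [NormedAddCommGroup H] [InnerProductSpace ℂ H] [CompleteSpace H]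
    (T : ∀ n, ℕ → (E n →L[ℂ] E n))
    (amp : ∀ n, (E n →L[ℂ] E n) →⋆ₐ[ℂ] (E (n + 1) →L[ℂ] E (n + 1)))
    (hamp : ∀ n k, 1 ≤ k → k ≤ n - 1 → amp n (T n k) = T (n + 1) (k + 1))
    (hsa : ∀ n k, 1 ≤ k → k ≤ n - 1 → IsSelfAdjoint (T n k))
    -- the elementary tensor map `tens n ξ η = ξ ⊗ η ∈ H^{⊗(n+1)}`
    (tens : ∀ n, H →ₗ[ℂ] E n →ₗ[ℂ] E (n + 1))
    (htinner : ∀ n (ξ ξ' : H) (η η' : E n),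
      (inner ℂ (tens n ξ η) (tens n ξ' η') : ℂ) = (inner ℂ ξ ξ' : ℂ) * (inner ℂ η η' : ℂ))
    (htamp : ∀ n (A : E n →L[ℂ] E n) (ξ : H) (η : E n),
      amp n A (tens n ξ η) = tens n ξ (A η))
    (q : ℝ) (hq0 : 0 ≤ q) (hqlt : q < 1)
    -- `q = ‖T‖ < 1`
    (hqnorm : ∀ n k, 1 ≤ k → k ≤ n - 1 → ‖T n k‖ ≤ q)
    -- `T` is a twist: all `P_{T,n}` are positive
    (hpos : ∀ n, (Pop T amp n).IsPositive) :
    ∀ n (ξ : H) (η : E n),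
      Real.sqrt ((inner ℂ (tens n ξ η) (Pop T amp (n + 1) (tens n ξ η)) : ℂ).re) ≤
        (‖ξ‖ / Real.sqrt (1 - q)) *
          Real.sqrt ((inner ℂ η (Pop T amp n η) : ℂ).re) :=
  stmt6_general T amp tens htinner htamp q hq0 hqlt hqnorm hpos

end
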